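/- Let $x \in M_N(\mathbb{C})$ and $k \geq 1$, and suppose $(J, I)$ is the lexicographically first pair in $\binom{[N]}{k} \times \binom{[N]}{k}$ (ordered first by $J$ then by $I$, each with the lexicographic order on $k$-subsets) such that the minor $x_{I,J} \neq 0$. Then for every upper triangular matrix $t$ with all diagonal entries equal to $1$, the pair $(J, I)$ is also the lexicographically first pair with $(t^* x t)_{I,J} \neq 0$, and moreover $(t^* x t)_{I,J} = x_{I,J}$. -/

import Mathlib

open Matrix

/-- The minor of `X` with rows `A` and columns `B` (increasing order); junk `0` if cards differ. -/
noncomputable def minorC {N : ℕ} (X : Matrix (Fin N) (Fin N) ℂ) (A B : Finset (Fin N)) : ℂ :=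
  if h : B.card = A.card then
    Matrix.det (Matrix.of fun (a b : Fin A.card) =>
      X (A.orderEmbOfFin rfl a) (B.orderEmbOfFin h b))
  else 0

/-- Lexicographic order on subsets: `A < B` iff for some position `p`,
`a_q ≤ b_q` for `q < p` and `a_p < b_p`. -/
def finsetLexLt {N : ℕ} (A B : Finset (Fin N)) : Prop :=
  ∃ h : A.card = B.card, ∃ p : Fin A.card,
    (∀ q : Fin A.card, q < p → A.orderEmbOfFin rfl q ≤ B.orderEmbOfFin h.symm q) ∧
    A.orderEmbOfFin rfl p < B.orderEmbOfFin h.symm p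

/-- Lexicographic order on pairs `(J, I)`: compare `J` first, then `I`. -/
def pairLexLt {N : ℕ} (J' I' J I : Finset (Fin N)) : Prop :=
  finsetLexLt J' J ∨ (J' = J ∧ finsetLexLt I' I)

open Equiv Function

/-!
Expanding a minor of `tᴴ * x * t` multilinearly in its rows and columns writes it as a sum, over
pairs of index maps `(f, g)`, of `∏ tᴴ (I'ᵢ, f i) * ∏ t (g j, J'ⱼ) * det x[f, g]`. In a nonzero term,
`t` being upper triangular forces `f ≤ I'` and `g ≤ J'` pointwise, and `det x[f, g]` is, up to sign,
the minor of `x` on the images `K`, `L` of `f`, `g`; the sorted enumerations of `K`, `L` are then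
still dominated by those of `I'`, `J'`. Pointwise domination can only lower the lexicographic
order, so minimality of `(J, I)` kills every term for pairs below `(J, I)`, and for `(J, I)` itself
leaves only `f = I`, `g = J`, whose coefficient is `1` since `t` is unipotent.
-/

namespace Matrix
variable {R m n o : Type*} [CommRing R] [Fintype m] [DecidableEq m]

theorem det_mul_eq_sum_prod_mul_det_submatrix [Fintype n] (A : Matrix m n R) (B : Matrix n m R) :
    det (A * B) = ∑ f : m → n, (∏ i, A i (f i)) * det (B.submatrix f id) := by
  have hrows : A * B = fun i => ∑ l, A i l • B l := by
    ext i j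
    simp [mul_apply, Finset.sum_apply]
  rw [det, hrows, ← AlternatingMap.coe_multilinearMap, MultilinearMap.map_sum]
  refine Finset.sum_congr rfl fun f _ => ?_
  rw [MultilinearMap.map_smul_univ, smul_eq_mul]
  rfl

theorem det_mul_eq_sum_det_submatrix_mul_prod [Fintype n] (A : Matrix m n R) (B : Matrix n m R) :
    det (A * B) = ∑ g : m → n, det (A.submatrix id g) * ∏ j, B (g j) j := by
  rw [← det_transpose, transpose_mul, det_mul_eq_sum_prod_mul_det_submatrix]
  refine Finset.sum_congr rfl fun g _ => ?_
  rw [mul_comm, ← det_transpose, transpose_submatrix, transpose_transpose]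
  rfl

theorem det_submatrix_perm (M : Matrix m m R) (σ τ : Perm m) :
    det (M.submatrix σ τ) = Perm.sign σ * Perm.sign τ * det M := by
  rw [show M.submatrix σ τ = (M.submatrix σ id).submatrix id τ from rfl, det_permute',
    det_permute]
  ring

theorem det_submatrix_eq_zero_of_not_injective_left {M : Matrix n o R} {f : m → n} (g : m → o)
    (hf : ¬Injective f) : det (M.submatrix f g) = 0 := by
  obtain ⟨i, j, hij, hne⟩ : ∃ i j, f i = f j ∧ i ≠ j := by
    simpa [Injective] using hf
  exact det_zero_of_row_eq hne (by ext; simp [hij])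

theorem det_submatrix_eq_zero_of_not_injective_right {M : Matrix n o R} (f : m → n) {g : m → o}
    (hg : ¬Injective g) : det (M.submatrix f g) = 0 := by
  rw [← det_transpose, transpose_submatrix]
  exact det_submatrix_eq_zero_of_not_injective_left f hg

end Matrix

section SortedEnumeration
variable {α : Type*} [LinearOrder α] {k : ℕ}

theorem Finset.exists_perm_eq_orderEmbOfFin_comp {s : Finset α} (h : s.card = k)
    {f : Fin k → α} (hf : Injective f) (hfs : ∀ i, f i ∈ s) :
    ∃ σ : Perm (Fin k), f = s.orderEmbOfFin h ∘ σ := by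
  let u : Fin k → Fin k := fun i => (s.orderIsoOfFin h).symm ⟨f i, hfs i⟩
  have hu : ∀ i, s.orderEmbOfFin h (u i) = f i := fun i => by
    rw [← coe_orderIsoOfFin_apply, OrderIso.apply_symm_apply]
  have hu_inj : Injective u := fun i j hij => hf (by rw [← hu i, ← hu j, hij])
  exact ⟨ofBijective u (Finite.injective_iff_bijective.mp hu_inj), funext fun i => (hu i).symm⟩

theorem Equiv.Perm.exists_le_le_apply (σ : Perm (Fin k)) (q : Fin k) : ∃ i ≤ q, q ≤ σ i := by
  by_contra! h
  have hmaps : Set.MapsTo σ (Finset.Iic q) (Finset.Iio q) := fun i hi => by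
    simpa using h i (by simpa using hi)
  have := Finset.card_le_card_of_injOn σ hmaps σ.injective.injOn
  simp at this

theorem Equiv.Perm.eq_one_of_forall_apply_le {σ : Perm (Fin k)} (h : ∀ i, σ i ≤ i) : σ = 1 := by
  ext q
  obtain ⟨i, hiq, hqi⟩ := σ.exists_le_le_apply q
  have hi : i = q := le_antisymm hiq (hqi.trans (h i))
  subst hi
  simp [le_antisymm (h i) hqi]

theorem Monotone.le_of_comp_perm_le {u e : Fin k → α} (hu : Monotone u) (he : Monotone e)
    {σ : Perm (Fin k)} (h : ∀ i, u (σ i) ≤ e i) (q : Fin k) : u q ≤ e q := by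
  obtain ⟨i, hiq, hqi⟩ := σ.exists_le_le_apply q
  exact (hu hqi).trans ((h i).trans (he hiq))

theorem StrictMono.perm_eq_one_of_comp_le {u : Fin k → α} (hu : StrictMono u)
    {σ : Perm (Fin k)} (h : ∀ i, u (σ i) ≤ u i) : σ = 1 :=
  Perm.eq_one_of_forall_apply_le fun i => hu.le_iff_le.mp (h i)

end SortedEnumeration

section LexOrder
variable {N k : ℕ} {A B C : Finset (Fin N)}

theorem finsetLexLt_iff (hA : A.card = k) (hB : B.card = k) :
    finsetLexLt A B ↔ ∃ p : Fin k,
      (∀ q < p, A.orderEmbOfFin hA q ≤ B.orderEmbOfFin hB q) ∧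
      A.orderEmbOfFin hA p < B.orderEmbOfFin hB p := by
  subst hA
  exact ⟨fun ⟨_, h⟩ => h, fun h => ⟨hB.symm, h⟩⟩

theorem finsetLexLt_of_le_of_ne (hA : A.card = k) (hB : B.card = k)
    (hle : ∀ q, A.orderEmbOfFin hA q ≤ B.orderEmbOfFin hB q) (hne : A ≠ B) :
    finsetLexLt A B := by
  obtain ⟨p, hp⟩ : ∃ p, A.orderEmbOfFin hA p ≠ B.orderEmbOfFin hB p := by
    by_contra! h
    apply hne
    rw [← A.image_orderEmbOfFin_univ hA, ← B.image_orderEmbOfFin_univ hB]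
    exact congrArg (Finset.univ.image ·) (funext h)
  exact (finsetLexLt_iff hA hB).mpr ⟨p, fun q _ => hle q, (hle p).lt_of_ne hp⟩

theorem finsetLexLt_of_le_of_finsetLexLt (hA : A.card = k) (hB : B.card = k)
    (hC : C.card = k) (hle : ∀ q, A.orderEmbOfFin hA q ≤ B.orderEmbOfFin hB q)
    (h : finsetLexLt B C) : finsetLexLt A C := by
  obtain ⟨p, hlt, hp⟩ := (finsetLexLt_iff hB hC).mp h
  exact (finsetLexLt_iff hA hC).mpr
    ⟨p, fun q hq => (hle q).trans (hlt q hq), (hle p).trans_lt hp⟩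

variable {J' I' J I L K : Finset (Fin N)}

theorem pairLexLt_of_le_of_pairLexLt (hL : L.card = k) (hK : K.card = k) (hJ' : J'.card = k)
    (hI' : I'.card = k) (hJ : J.card = k) (hI : I.card = k)
    (hLJ : ∀ q, L.orderEmbOfFin hL q ≤ J'.orderEmbOfFin hJ' q)
    (hKI : ∀ q, K.orderEmbOfFin hK q ≤ I'.orderEmbOfFin hI' q)
    (h : pairLexLt J' I' J I) : pairLexLt L K J I := by
  rcases h with hlt | ⟨rfl, hlt⟩
  · exact .inl (finsetLexLt_of_le_of_finsetLexLt hL hJ' hJ hLJ hlt)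
  · by_cases hLJ' : L = J'
    · exact .inr ⟨hLJ', finsetLexLt_of_le_of_finsetLexLt hK hI' hI hKI hlt⟩
    · exact .inl (finsetLexLt_of_le_of_ne hL hJ' hLJ hLJ')

theorem pairLexLt_of_le_of_ne (hL : L.card = k) (hK : K.card = k) (hJ : J.card = k)
    (hI : I.card = k) (hLJ : ∀ q, L.orderEmbOfFin hL q ≤ J.orderEmbOfFin hJ q)
    (hKI : ∀ q, K.orderEmbOfFin hK q ≤ I.orderEmbOfFin hI q) (hne : ¬(L = J ∧ K = I)) :
    pairLexLt L K J I := by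
  by_cases hLJ' : L = J
  · exact .inr ⟨hLJ', finsetLexLt_of_le_of_ne hK hI hKI fun h => hne ⟨hLJ', h⟩⟩
  · exact .inl (finsetLexLt_of_le_of_ne hL hJ hLJ hLJ')

end LexOrder

theorem Matrix.BlockTriangular.le_of_prod_ne_zero {R α m : Type*} [CommMonoidWithZero R]
    [LinearOrder α] [Fintype m] {t : Matrix α α R} (ht : t.BlockTriangular id) {g e : m → α}
    (h : ∏ j, t (g j) (e j) ≠ 0) (j : m) : g j ≤ e j := by
  by_contra! hlt
  exact h (Finset.prod_eq_zero (Finset.mem_univ j) (ht hlt))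

section Minors
variable {N k : ℕ}

theorem minorC_eq_det (X : Matrix (Fin N) (Fin N) ℂ) {A B : Finset (Fin N)} (hA : A.card = k)
    (hB : B.card = k) :
    minorC X A B = det (X.submatrix (A.orderEmbOfFin hA) (B.orderEmbOfFin hB)) := by
  subst hA
  rw [minorC, dif_pos hB]
  rfl

theorem minorC_mul_mul_eq_sum (A B C : Matrix (Fin N) (Fin N) ℂ) {I J : Finset (Fin N)}
    (hI : I.card = k) (hJ : J.card = k) :
    minorC (A * B * C) I J = ∑ f : Fin k → Fin N, ∑ g : Fin k → Fin N,
      (∏ i, A (I.orderEmbOfFin hI i) (f i)) * (∏ j, C (g j) (J.orderEmbOfFin hJ j)) *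
        det (B.submatrix f g) := by
  rw [minorC_eq_det _ hI hJ, mul_assoc, submatrix_mul _ _ _ id _ bijective_id,
    det_mul_eq_sum_prod_mul_det_submatrix]
  refine Finset.sum_congr rfl fun f _ => ?_
  rw [submatrix_submatrix, submatrix_mul _ _ _ id _ bijective_id,
    det_mul_eq_sum_det_submatrix_mul_prod, Finset.mul_sum]
  refine Finset.sum_congr rfl fun g _ => ?_
  simp only [submatrix_apply, submatrix_submatrix, comp_id, id_comp, id_eq]
  ring

theorem exists_minorC_ne_zero_of_det_submatrix_ne_zero (X : Matrix (Fin N) (Fin N) ℂ)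
    {f g : Fin k → Fin N} (h : det (X.submatrix f g) ≠ 0) :
    ∃ (K L : Finset (Fin N)) (hK : K.card = k) (hL : L.card = k) (σ τ : Perm (Fin k)),
      f = K.orderEmbOfFin hK ∘ σ ∧ g = L.orderEmbOfFin hL ∘ τ ∧ minorC X K L ≠ 0 := by
  have hf : Injective f := not_not.mp (mt (det_submatrix_eq_zero_of_not_injective_left g) h)
  have hg : Injective g := not_not.mp (mt (det_submatrix_eq_zero_of_not_injective_right f) h)
  have hK : (Finset.univ.image f).card = k := by simp [Finset.card_image_of_injective _ hf]
  have hL : (Finset.univ.image g).card = k := by simp [Finset.card_image_of_injective _ hg]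
  obtain ⟨σ, hσ⟩ := Finset.exists_perm_eq_orderEmbOfFin_comp hK hf (by simp)
  obtain ⟨τ, hτ⟩ := Finset.exists_perm_eq_orderEmbOfFin_comp hL hg (by simp)
  refine ⟨_, _, hK, hL, σ, τ, hσ, hτ, fun h0 => h ?_⟩
  rw [hσ, hτ, ← submatrix_submatrix, det_submatrix_perm, ← minorC_eq_det, h0, mul_zero]

end Minors

section FirstNonzeroMinor
variable {N k : ℕ} {x t : Matrix (Fin N) (Fin N) ℂ} {I J I' J' : Finset (Fin N)}
  {f g : Fin k → Fin N}

theorem exists_dominated_minorC_ne_zero (ht : t.BlockTriangular id) (hI' : I'.card = k)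
    (hJ' : J'.card = k)
    (h : (∏ i, tᴴ (I'.orderEmbOfFin hI' i) (f i)) * (∏ j, t (g j) (J'.orderEmbOfFin hJ' j)) *
      det (x.submatrix f g) ≠ 0) :
    ∃ (K L : Finset (Fin N)) (hK : K.card = k) (hL : L.card = k) (σ τ : Perm (Fin k)),
      f = K.orderEmbOfFin hK ∘ σ ∧ g = L.orderEmbOfFin hL ∘ τ ∧ minorC x K L ≠ 0 ∧
      (∀ i, K.orderEmbOfFin hK (σ i) ≤ I'.orderEmbOfFin hI' i) ∧
      ∀ j, L.orderEmbOfFin hL (τ j) ≤ J'.orderEmbOfFin hJ' j := by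
  obtain ⟨hprod, hdet⟩ := mul_ne_zero_iff.mp h
  obtain ⟨hrows, hcols⟩ := mul_ne_zero_iff.mp hprod
  obtain ⟨K, L, hK, hL, σ, τ, rfl, rfl, hKL⟩ :=
    exists_minorC_ne_zero_of_det_submatrix_ne_zero x hdet
  simp only [conjTranspose_apply, ← star_prod, ne_eq, star_eq_zero] at hrows
  exact ⟨K, L, hK, hL, σ, τ, rfl, rfl, hKL, ht.le_of_prod_ne_zero hrows,
    ht.le_of_prod_ne_zero hcols⟩

variable (hfirst : ∀ I' J' : Finset (Fin N), I'.card = k → J'.card = k →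
  pairLexLt J' I' J I → minorC x I' J' = 0)
include hfirst

theorem term_eq_zero_of_pairLexLt (ht : t.BlockTriangular id) (hI : I.card = k)
    (hJ : J.card = k) (hI' : I'.card = k) (hJ' : J'.card = k) (hlt : pairLexLt J' I' J I) :
    (∏ i, tᴴ (I'.orderEmbOfFin hI' i) (f i)) * (∏ j, t (g j) (J'.orderEmbOfFin hJ' j)) *
      det (x.submatrix f g) = 0 := by
  by_contra h
  obtain ⟨K, L, hK, hL, σ, τ, -, -, hKL, hσ, hτ⟩ := exists_dominated_minorC_ne_zero ht hI' hJ' h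
  refine hKL (hfirst K L hK hL (pairLexLt_of_le_of_pairLexLt hL hK hJ' hI' hJ hI ?_ ?_ hlt))
  · exact (L.orderEmbOfFin hL).monotone.le_of_comp_perm_le (J'.orderEmbOfFin hJ').monotone hτ
  · exact (K.orderEmbOfFin hK).monotone.le_of_comp_perm_le (I'.orderEmbOfFin hI').monotone hσ

theorem term_eq_zero_of_ne (ht : t.BlockTriangular id) (hI : I.card = k) (hJ : J.card = k)
    (hfg : ¬(f = I.orderEmbOfFin hI ∧ g = J.orderEmbOfFin hJ)) :
    (∏ i, tᴴ (I.orderEmbOfFin hI i) (f i)) * (∏ j, t (g j) (J.orderEmbOfFin hJ j)) *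
      det (x.submatrix f g) = 0 := by
  by_contra h
  obtain ⟨K, L, hK, hL, σ, τ, rfl, rfl, hKL, hσ, hτ⟩ := exists_dominated_minorC_ne_zero ht hI hJ h
  obtain ⟨rfl, rfl⟩ : L = J ∧ K = I := by
    by_contra hne
    refine hKL (hfirst K L hK hL (pairLexLt_of_le_of_ne hL hK hJ hI ?_ ?_ hne))
    · exact (L.orderEmbOfFin hL).monotone.le_of_comp_perm_le (J.orderEmbOfFin hJ).monotone hτ
    · exact (K.orderEmbOfFin hK).monotone.le_of_comp_perm_le (I.orderEmbOfFin hI).monotone hσ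
  rw [(K.orderEmbOfFin hK).strictMono.perm_eq_one_of_comp_le hσ,
    (L.orderEmbOfFin hL).strictMono.perm_eq_one_of_comp_le hτ] at hfg
  exact hfg ⟨rfl, rfl⟩

end FirstNonzeroMinor

theorem stmt6 (N k : ℕ) (x : Matrix (Fin N) (Fin N) ℂ)
    (I J : Finset (Fin N)) (hI : I.card = k) (hJ : J.card = k)
    (hne : minorC x I J ≠ 0)
    (hfirst : ∀ I' J' : Finset (Fin N), I'.card = k → J'.card = k →
      pairLexLt J' I' J I → minorC x I' J' = 0)
    (t : Matrix (Fin N) (Fin N) ℂ)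
    (htriang : t.BlockTriangular id) (hdiag : ∀ i, t i i = 1) :
    (∀ I' J' : Finset (Fin N), I'.card = k → J'.card = k →
      pairLexLt J' I' J I → minorC (tᴴ * x * t) I' J' = 0) ∧
    minorC (tᴴ * x * t) I J = minorC x I J ∧
    minorC (tᴴ * x * t) I J ≠ 0 := by
  have hminor : minorC (tᴴ * x * t) I J = minorC x I J := by
    rw [minorC_mul_mul_eq_sum _ _ _ hI hJ,
      Fintype.sum_eq_single _ fun f hf => Finset.sum_eq_zero fun g _ =>
        term_eq_zero_of_ne hfirst htriang hI hJ fun hfg => hf hfg.1,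
      Fintype.sum_eq_single _ fun g hg =>
        term_eq_zero_of_ne hfirst htriang hI hJ fun hfg => hg hfg.2]
    simp [conjTranspose_apply, hdiag, minorC_eq_det x hI hJ]
  refine ⟨fun I' J' hI' hJ' hlt => ?_, hminor, hminor ▸ hne⟩
  rw [minorC_mul_mul_eq_sum _ _ _ hI' hJ']
  exact Finset.sum_eq_zero fun f _ => Finset.sum_eq_zero fun g _ =>
    term_eq_zero_of_pairLexLt hfirst htriang hI hJ hI' hJ' hlt
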